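/- Suppose log₂ V_k = c + (1−2H)k + ε_k with ε_k = O(2^{k(2H−1)}) + o(2^{k(−1/2+ε)}) for all ε > 0, where H ∈ (0,1/2) and c = 2log₂ a + 2H log₂ T. Then Ĥ_k := (1 − (1/k)log₂ V_k)/2 satisfies Ĥ_k = H − c/(2k) + o(1/k), while H̃_k := (log₂(V_k/V_{k+1}) + 1)/2 satisfies H̃_k = H + O(2^{k(2H−1)}) + o(2^{k(−1/2+ε)}) as k → ∞. -/
import Mathlib


open Real Filter Asymptotics

lemma tendsto_rpow_neg_exp {x : ℝ} (hx : x < 0) :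
    Tendsto (fun k : ℕ => (2 : ℝ) ^ ((k : ℝ) * x)) atTop (nhds 0) := by
  have h : ∀ k : ℕ, (2 : ℝ) ^ ((k : ℝ) * x) = ((2 : ℝ) ^ x) ^ k := by
    intro k
    rw [mul_comm, Real.rpow_mul (by norm_num), Real.rpow_natCast]
  simp only [h]
  exact tendsto_pow_atTop_nhds_zero_of_lt_one (Real.rpow_nonneg (by norm_num) _)
    (Real.rpow_lt_one_of_one_lt_of_neg one_lt_two hx)

lemma shift_isBigO (x : ℝ) :
    (fun k : ℕ => (2 : ℝ) ^ ((((k + 1) : ℕ) : ℝ) * x)) =O[atTop]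
      fun k : ℕ => (2 : ℝ) ^ ((k : ℝ) * x) := by
  have h : ∀ k : ℕ, (2 : ℝ) ^ ((((k + 1) : ℕ) : ℝ) * x)
      = (2 : ℝ) ^ x * (2 : ℝ) ^ ((k : ℝ) * x) := by
    intro k
    rw [← Real.rpow_add (by norm_num)]
    push_cast
    ring_nf
  simp only [h]
  exact (isBigO_refl _ _).const_mul_left _

/-- Asymptotic rates of the two dyadic quadratic variation Hurst estimators:
`Ĥ_k = H - c/(2k) + o(1/k)` while `H̃_k = H + O(2^{k(2H-1)}) + o(2^{k(-1/2+ε)})`. -/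
theorem stmt_15 (a T H c : ℝ) (ha : 0 < a) (hT : 0 < T)
    (hH : H ∈ Set.Ioo (0 : ℝ) (1 / 2))
    (hc : c = 2 * Real.logb 2 a + 2 * H * Real.logb 2 T)
    (V : ℕ → ℝ) (hV : ∀ k, 0 < V k) (ε : ℕ → ℝ)
    (hlog : ∀ k : ℕ, Real.logb 2 (V k) = c + (1 - 2 * H) * k + ε k)
    (hε : ∃ e₁ e₂ : ℕ → ℝ, (∀ k, ε k = e₁ k + e₂ k) ∧
      (e₁ =O[atTop] fun k : ℕ => (2 : ℝ) ^ ((k : ℝ) * (2 * H - 1))) ∧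
      (∀ δ > (0 : ℝ), e₂ =o[atTop] fun k : ℕ => (2 : ℝ) ^ ((k : ℝ) * (-1 / 2 + δ)))) :
    ((fun k : ℕ => (1 - (1 / (k : ℝ)) * Real.logb 2 (V k)) / 2 - (H - c / (2 * (k : ℝ))))
        =o[atTop] fun k : ℕ => 1 / (k : ℝ)) ∧
    (∃ g₁ g₂ : ℕ → ℝ,
      (∀ k, (Real.logb 2 (V k / V (k + 1)) + 1) / 2 - H = g₁ k + g₂ k) ∧
      (g₁ =O[atTop] fun k : ℕ => (2 : ℝ) ^ ((k : ℝ) * (2 * H - 1))) ∧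
      (∀ δ > (0 : ℝ), g₂ =o[atTop] fun k : ℕ => (2 : ℝ) ^ ((k : ℝ) * (-1 / 2 + δ)))) := by
  obtain ⟨e₁, e₂, hsum, he₁, he₂⟩ := hε
  obtain ⟨hH0, hH2⟩ := hH
  have h1 : (2 : ℝ) * H - 1 < 0 := by linarith
  have ht1 : Tendsto e₁ atTop (nhds 0) := he₁.trans_tendsto (tendsto_rpow_neg_exp h1)
  have ht2 : Tendsto e₂ atTop (nhds 0) :=
    (he₂ (1/4) (by norm_num)).isBigO.trans_tendsto (tendsto_rpow_neg_exp (by norm_num))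
  have htε : Tendsto ε atTop (nhds 0) := by
    have := ht1.add ht2
    rw [add_zero] at this
    exact this.congr fun k => (hsum k).symm
  constructor
  · have hεo : ε =o[atTop] (fun _ : ℕ => (1 : ℝ)) := (isLittleO_one_iff ℝ).2 htε
    have key : (fun k : ℕ => (-1/2 : ℝ) * (ε k * (1 / (k : ℝ)))) =o[atTop]
        fun k : ℕ => 1 / (k : ℝ) := by
      have := (hεo.mul_isBigO (isBigO_refl (fun k : ℕ => 1 / (k : ℝ)) atTop)).const_mul_left
        (-1/2 : ℝ)
      simpa using this
    refine key.congr' ?_ (by rfl)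
    filter_upwards [eventually_ge_atTop 1] with k hk
    have hk0 : (k : ℝ) ≠ 0 := Nat.cast_ne_zero.2 (by omega)
    rw [hlog k]
    field_simp
    ring
  · refine ⟨fun k => (1/2 : ℝ) * (e₁ k - e₁ (k + 1)),
      fun k => (1/2 : ℝ) * (e₂ k - e₂ (k + 1)), ?_, ?_, ?_⟩
    · intro k
      rw [Real.logb_div (hV k).ne' (hV (k + 1)).ne', hlog k, hlog (k + 1), hsum k, hsum (k + 1)]
      push_cast
      ring
    · have hshift : (fun k : ℕ => e₁ (k + 1)) =O[atTop]
          fun k : ℕ => (2 : ℝ) ^ ((k : ℝ) * (2 * H - 1)) :=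
        (he₁.comp_tendsto (tendsto_add_atTop_nat 1)).trans (shift_isBigO _)
      exact (he₁.sub hshift).const_mul_left _
    · intro δ hδ
      have hshift : (fun k : ℕ => e₂ (k + 1)) =o[atTop]
          fun k : ℕ => (2 : ℝ) ^ ((k : ℝ) * (-1 / 2 + δ)) :=
        ((he₂ δ hδ).comp_tendsto (tendsto_add_atTop_nat 1)).trans_isBigO (shift_isBigO _)
      exact ((he₂ δ hδ).sub hshift).const_mul_left _
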